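/- arXiv:2211.15981 — 6 statements merged into one kernel-verified Lean document; each statement's English description precedes it below -/
import Mathlib

section
/- Let (R, pR) be a discrete valuation domain with valuation v, f = ∏_{g∈P} g^{m_g} ∈ R[x] a primitive non-constant polynomial with irreducible divisor set P, multiplicities m_g ≥ 1, and v(d(f)) = n. Let W be a set of representatives of the witness set W(f) = {a : v(f(a)) = n} modulo p^{⌈n/2⌉}R. Then for each a ∈ W(f) there exists w ∈ W such that v(g(a)) = v(g(w)) for all g ∈ P. -/
/-!
If `v(a - w) ≥ k := ⌈n/2⌉`, then for every polynomial `g` the ultrametric inequality gives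
`v(g(a)) = v(g(w))` or `min (v(g(a))) (v(g(w))) ≥ k`, because `a - w` divides `g(a) - g(w)`.
Both valuation vectors have the same weighted sum `∑ m_g v(g(·)) = n`, so if they differed,
some `g` would have `v(g(a)) < v(g(w))` and some `h ≠ g` would have `v(h(w)) < v(h(a))`;
then `v(g(a)) ≥ k` and `v(h(a)) ≥ k + 1`, and the weighted sum for `a` would exceed `2k ≥ n`.
-/

open Polynomial IsDiscreteValuationRing

namespace Nat

theorem not_lt_of_sum_mul_eq {ι : Type*} {s : Finset ι} {m A B : ι → ℕ} {k : ℕ}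
    (hm : ∀ i ∈ s, 0 < m i) (hAB : ∑ i ∈ s, m i * A i = ∑ i ∈ s, m i * B i)
    (hle : ∑ i ∈ s, m i * A i ≤ 2 * k) (hk : ∀ i ∈ s, A i ≠ B i → k ≤ min (A i) (B i))
    {i : ι} (hi : i ∈ s) : ¬ A i < B i := by
  intro hlt
  obtain ⟨j, hj, hBA⟩ : ∃ j ∈ s, B j < A j := by
    by_contra! hAleB
    refine hAB.not_lt (Finset.sum_lt_sum (fun j hj => ?_) ⟨i, hi, ?_⟩)
    · exact Nat.mul_le_mul_left _ (hAleB j hj)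
    · exact Nat.mul_lt_mul_of_pos_left hlt (hm i hi)
  have hki : k ≤ A i := (hk i hi hlt.ne).trans (min_le_left _ _)
  have hkj : k ≤ B j := (hk j hj hBA.ne').trans (min_le_right _ _)
  have hij : i ≠ j := by rintro rfl; omega
  have hsum : m i * A i + m j * A j ≤ ∑ l ∈ s, m l * A l :=
    Finset.add_le_sum (f := fun l => m l * A l) (fun _ _ => Nat.zero_le _) hi hj hij
  have hmi := Nat.le_mul_of_pos_left (A i) (hm i hi)
  have hmj := Nat.le_mul_of_pos_left (A j) (hm j hj)
  omega

theorem eqOn_of_sum_mul_eq {ι : Type*} {s : Finset ι} {m A B : ι → ℕ} {k : ℕ}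
    (hm : ∀ i ∈ s, 0 < m i) (hAB : ∑ i ∈ s, m i * A i = ∑ i ∈ s, m i * B i)
    (hle : ∑ i ∈ s, m i * A i ≤ 2 * k) (hk : ∀ i ∈ s, A i ≠ B i → k ≤ min (A i) (B i)) :
    Set.EqOn A B s := fun _ hi =>
  le_antisymm
    (not_lt.1 <| not_lt_of_sum_mul_eq hm hAB.symm (hAB ▸ hle)
      (fun j hj hne => min_comm (A j) (B j) ▸ hk j hj hne.symm) hi)
    (not_lt.1 <| not_lt_of_sum_mul_eq hm hAB hle hk hi)

end Nat

namespace ENat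

theorem ne_top_of_sum_eq_coe {ι : Type*} {s : Finset ι} {A : ι → ℕ∞} {n : ℕ}
    (h : ∑ i ∈ s, A i = n) {i : ι} (hi : i ∈ s) : A i ≠ ⊤ :=
  fun htop => natCast_ne_top n (h ▸ sum_eq_top.2 ⟨i, hi, htop⟩)

theorem sum_mul_toNat_eq {ι : Type*} {s : Finset ι} {m : ι → ℕ} {A : ι → ℕ∞} {n : ℕ}
    (h : ∑ i ∈ s, (m i : ℕ∞) * A i = n) : ∑ i ∈ s, m i * (A i).toNat = n := by
  simpa [toNat_sum fun i hi => ne_top_of_sum_eq_coe h hi] using congrArg toNat h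

theorem eqOn_of_sum_mul_eq {ι : Type*} {s : Finset ι} {m : ι → ℕ} {A B : ι → ℕ∞} {n k : ℕ}
    (hm : ∀ i ∈ s, 0 < m i) (hA : ∑ i ∈ s, (m i : ℕ∞) * A i = n)
    (hB : ∑ i ∈ s, (m i : ℕ∞) * B i = n) (hn : n ≤ 2 * k)
    (hk : ∀ i ∈ s, A i ≠ B i → (k : ℕ∞) ≤ min (A i) (B i)) : Set.EqOn A B s := by
  have hfin {C : ι → ℕ∞} (hC : ∑ i ∈ s, (m i : ℕ∞) * C i = n) {i : ι} (hi : i ∈ s) :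
      C i ≠ ⊤ :=
    fun htop => ne_top_of_sum_eq_coe hC hi (by simp [htop, (hm i hi).ne'])
  have hAB : ∀ i ∈ s, A i = (A i).toNat ∧ B i = (B i).toNat := fun i hi =>
    ⟨(natCast_toNat (hfin hA hi)).symm, (natCast_toNat (hfin hB hi)).symm⟩
  have hnat := Nat.eqOn_of_sum_mul_eq (k := k) hm
    ((sum_mul_toNat_eq hA).trans (sum_mul_toNat_eq hB).symm) ((sum_mul_toNat_eq hA).trans_le hn)
    fun i hi hne => by
      have hki := hk i hi fun h => hne (by rw [h])
      rw [(hAB i hi).1, (hAB i hi).2] at hki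
      simpa only [le_min_iff, Nat.cast_le] using hki
  intro i hi
  rw [(hAB i hi).1, (hAB i hi).2]
  exact congrArg Nat.cast (hnat hi)

end ENat

namespace IsDiscreteValuationRing

variable {R : Type*} [CommRing R] [IsDomain R] [IsDiscreteValuationRing R]

theorem addVal_prod {ι : Type*} (s : Finset ι) (x : ι → R) :
    addVal R (∏ i ∈ s, x i) = ∑ i ∈ s, addVal R (x i) := by
  classical
  induction s using Finset.induction_on with
  | empty => simp
  | insert i s hi ih => rw [Finset.prod_insert hi, Finset.sum_insert hi, addVal_mul, ih]

theorem addVal_eval_prod_pow {ι : Type*} (s : Finset ι) (p : ι → R[X]) (m : ι → ℕ) (x : R) :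
    addVal R ((∏ i ∈ s, p i ^ m i).eval x) = ∑ i ∈ s, (m i : ℕ∞) * addVal R ((p i).eval x) := by
  simp [eval_prod, addVal_prod]

theorem le_min_addVal_eval_of_ne {x y : R} {k : ℕ∞} (hk : k ≤ addVal R (x - y)) (g : R[X])
    (hne : addVal R (g.eval x) ≠ addVal R (g.eval y)) :
    k ≤ min (addVal R (g.eval x)) (addVal R (g.eval y)) :=
  calc k ≤ addVal R (x - y) := hk
    _ ≤ addVal R (g.eval x - g.eval y) := addVal_le_iff_dvd.2 (sub_dvd_eval_sub x y g)
    _ = min (addVal R (g.eval x)) (addVal R (g.eval y)) := by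
      rw [sub_eq_add_neg, (addVal R).map_add_of_distinct_val (by rwa [AddValuation.map_neg]),
        AddValuation.map_neg]

end IsDiscreteValuationRing

theorem stmt_7_general (R : Type*) [CommRing R] [IsDomain R] [IsDiscreteValuationRing R]
    (P : Finset (Polynomial R))
    (m : Polynomial R → ℕ) (hm : ∀ g ∈ P, 1 ≤ m g)
    (f : Polynomial R) (hf : f = ∏ g ∈ P, g ^ (m g))
    (n : ℕ)
    (W : Set R)
    (hWsub : ∀ w ∈ W, addVal R (f.eval w) = n)
    (hWrep : ∀ a : R, addVal R (f.eval a) = n →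
      ∃ w ∈ W, ((((n + 1) / 2 : ℕ)) : ℕ∞) ≤ addVal R (a - w)) :
    ∀ a : R, addVal R (f.eval a) = n →
      ∃ w ∈ W, ∀ g ∈ P, addVal R (g.eval a) = addVal R (g.eval w) := by
  intro a ha
  obtain ⟨w, hwW, hdist⟩ := hWrep a ha
  have hsum {x : R} (hx : addVal R (f.eval x) = n) :
      ∑ g ∈ P, (m g : ℕ∞) * addVal R (g.eval x) = n := by
    rw [← addVal_eval_prod_pow, ← hf, hx]
  exact ⟨w, hwW, ENat.eqOn_of_sum_mul_eq hm (hsum ha) (hsum (hWsub w hwW)) (by omega)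
    fun g _ hne => le_min_addVal_eval_of_ne hdist g hne⟩

theorem stmt_7 (R : Type*) [CommRing R] [IsDomain R] [IsDiscreteValuationRing R]
    [Finite (R ⧸ IsLocalRing.maximalIdeal R)]
    (P : Finset (Polynomial R)) (hPne : P.Nonempty)
    (hirr : ∀ g ∈ P, Irreducible g)
    (hassoc : ∀ g ∈ P, ∀ h ∈ P, g ≠ h → ¬ Associated g h)
    (m : Polynomial R → ℕ) (hm : ∀ g ∈ P, 1 ≤ m g)
    (f : Polynomial R) (hf : f = ∏ g ∈ P, g ^ (m g))
    (hprim : f.IsPrimitive) (hdeg : 0 < f.natDegree) (n : ℕ)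
    (hge : ∀ a : R, (n : ℕ∞) ≤ addVal R (f.eval a))
    (hwit : ∃ a : R, addVal R (f.eval a) = n)
    (W : Set R)
    (hWsub : ∀ w ∈ W, addVal R (f.eval w) = n)
    (hWrep : ∀ a : R, addVal R (f.eval a) = n →
      ∃ w ∈ W, ((((n + 1) / 2 : ℕ)) : ℕ∞) ≤ addVal R (a - w)) :
    ∀ a : R, addVal R (f.eval a) = n →
      ∃ w ∈ W, ∀ g ∈ P, addVal R (g.eval a) = addVal R (g.eval w) :=
  stmt_7_general R P m hm f hf n W hWsub hWrep
end

section
/- Let (R, pR) be a discrete valuation domain with valuation v and finite residue field, f = ∏_{g∈P} g^{m_g} ∈ R[x] primitive with v(d(f)) = n, and F = f/pⁿ. Suppose 0 ≠ k ∈ ℕ₀^P and ℓ ∈ ℕ₀ are such that H = (∏_{g∈P} g^{k_g})/p^ℓ divides F^j in Int(R) for some j ∈ ℕ. Then for every fixed divisor witness w ∈ W(f) (i.e., v(f(w)) = n), one has Σ_{g∈P} k_g · v(g(w)) = ℓ; equivalently, k − (ℓ/n)·m lies in the fixed divisor kernel fdk(f) = {x ∈ ℚ^P : Σ_g x_g v(g(w))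 = 0 for all w ∈ W(f)}. -/
/-!
Evaluate everything at a witness `w`. Since `v(f(w)) = n`, we have `f(w) = pⁿ u` with `u` a unit,
so `F(w) = u`. Writing `H(w) = b` and `G(w) = c` with `b, c ∈ R`, the identity `F^j = H G` gives
`u^j = b c`, hence `b` is a unit. Then `∏ g(w)^{k_g} = p^ℓ b` has valuation exactly `ℓ`.
-/

open Polynomial IsDiscreteValuationRing

/-- The ring of integer-valued polynomials `Int(R)` as a subring of `K[x]`. -/
def intValued (R K : Type*) [CommRing R] [Field K] [Algebra R K] : Subring (Polynomial K) where
  carrier := {F | ∀ a : R, ∃ b : R, F.eval (algebraMap R K a) = algebraMap R K b}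
  mul_mem' := by
    intro F G hF hG a
    obtain ⟨b, hb⟩ := hF a
    obtain ⟨c, hc⟩ := hG a
    exact ⟨b * c, by simp [hb, hc]⟩
  one_mem' := fun a => ⟨1, by simp⟩
  add_mem' := by
    intro F G hF hG a
    obtain ⟨b, hb⟩ := hF a
    obtain ⟨c, hc⟩ := hG a
    exact ⟨b + c, by simp [hb, hc]⟩
  zero_mem' := fun a => ⟨0, by simp⟩
  neg_mem' := by
    intro F hF a
    obtain ⟨b, hb⟩ := hF a
    exact ⟨-b, by simp [hb]⟩

theorem IsFractionRing.algebraMap_mul_inv_eq_algebraMap_iff {R K : Type*} [CommRing R]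
    [Field K] [Algebra R K] [IsFractionRing R K] {q : R} (hq : q ≠ 0) {x y : R} :
    algebraMap R K x * (algebraMap R K q)⁻¹ = algebraMap R K y ↔ x = q * y := by
  rw [mul_inv_eq_iff_eq_mul₀ (IsFractionRing.to_map_eq_zero_iff.not.mpr hq), ← map_mul,
    (IsFractionRing.injective R K).eq_iff, mul_comm]

theorem Polynomial.eval_algebraMap_map_mul_C_inv {R K : Type*} [CommRing R] [Field K]
    [Algebra R K] (f : R[X]) (q w : R) :
    (f.map (algebraMap R K) * C (algebraMap R K q)⁻¹).eval (algebraMap R K w) =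
      algebraMap R K (f.eval w) * (algebraMap R K q)⁻¹ := by
  rw [eval_mul, eval_C, eval_map_algebraMap, aeval_algebraMap_apply, aeval_def, eval₂_eq_eval_map,
    Algebra.algebraMap_self, Polynomial.map_id]

namespace IsDiscreteValuationRing

variable {R : Type*} [CommRing R] [IsDomain R] [IsDiscreteValuationRing R]

theorem exists_eq_pow_mul_unit {p : R} (hp : Irreducible p) {x : R} {n : ℕ}
    (hx : addVal R x = n) : ∃ u : Rˣ, x = p ^ n * u := by
  obtain ⟨u, hu⟩ := (addVal_eq_iff_associated (p ^ n) x).mp (by rw [hp.addVal_pow, hx])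
  exact ⟨u, hu.symm⟩

end IsDiscreteValuationRing

theorem stmt_8_general (R K : Type*) [CommRing R] [IsDomain R] [IsDiscreteValuationRing R]
    [Field K] [Algebra R K] [IsFractionRing R K]
    (p : R) (hp : Irreducible p)
    (P : Finset (Polynomial R))
    (f : Polynomial R) (n : ℕ)
    (F : Polynomial K) (hF : F = (f.map (algebraMap R K)) * C (((algebraMap R K p) ^ n)⁻¹))
    (k : Polynomial R → ℕ) (ℓ : ℕ)
    (H : Polynomial K)
    (hH : H = (∏ g ∈ P, (g.map (algebraMap R K)) ^ (k g)) * C (((algebraMap R K p) ^ ℓ)⁻¹))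
    (hHmem : H ∈ intValued R K)
    (j : ℕ)
    (hdvd : ∃ G ∈ intValued R K, F ^ j = H * G) :
    ∀ w : R, addVal R (f.eval w) = n →
      (∑ g ∈ P, (k g) • addVal R (g.eval w)) = (ℓ : ℕ∞) := by
  intro w hw
  obtain ⟨G, hGmem, hFG⟩ := hdvd
  obtain ⟨b, hb⟩ := hHmem w
  obtain ⟨c, hc⟩ := hGmem w
  obtain ⟨u, hu⟩ := exists_eq_pow_mul_unit hp hw
  have hFw : F.eval (algebraMap R K w) = algebraMap R K u := by
    rw [hF, ← map_pow, eval_algebraMap_map_mul_C_inv,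
      IsFractionRing.algebraMap_mul_inv_eq_algebraMap_iff (pow_ne_zero n hp.ne_zero), hu]
  have hbc : (u : R) ^ j = b * c := IsFractionRing.injective R K <| by
    simpa only [eval_pow, eval_mul, hFw, hb, hc, map_pow, map_mul] using
      congrArg (eval (algebraMap R K w)) hFG
  have hb_unit : IsUnit b := isUnit_of_mul_isUnit_left (hbc ▸ u.isUnit.pow j)
  have hprod : ∏ g ∈ P, g.eval w ^ k g = p ^ ℓ * b := by
    rw [← IsFractionRing.algebraMap_mul_inv_eq_algebraMap_iff (K := K) (pow_ne_zero ℓ hp.ne_zero), ← hb,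
      hH, ← map_pow]
    simp only [← Polynomial.map_pow, ← Polynomial.map_prod, eval_algebraMap_map_mul_C_inv,
      eval_prod, eval_pow]
  calc ∑ g ∈ P, k g • addVal R (g.eval w)
      = addVal R (∏ g ∈ P, g.eval w ^ k g) := by simp only [addVal_prod, addVal_pow]
    _ = ℓ := by rw [hprod, addVal_mul, hp.addVal_pow, addVal_eq_zero_iff.mpr hb_unit, add_zero]

theorem stmt_8 (R K : Type*) [CommRing R] [IsDomain R] [IsDiscreteValuationRing R]
    [Field K] [Algebra R K] [IsFractionRing R K]
    [Finite (R ⧸ IsLocalRing.maximalIdeal R)]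
    (p : R) (hp : Irreducible p)
    (P : Finset (Polynomial R)) (hPne : P.Nonempty)
    (hirr : ∀ g ∈ P, Irreducible g)
    (hassoc : ∀ g ∈ P, ∀ h ∈ P, g ≠ h → ¬ Associated g h)
    (m : Polynomial R → ℕ) (hm : ∀ g ∈ P, 1 ≤ m g)
    (f : Polynomial R) (hf : f = ∏ g ∈ P, g ^ (m g))
    (hprim : f.IsPrimitive) (n : ℕ)
    (hge : ∀ a : R, (n : ℕ∞) ≤ addVal R (f.eval a))
    (hwit : ∃ a : R, addVal R (f.eval a) = n)
    (F : Polynomial K) (hF : F = (f.map (algebraMap R K)) * C (((algebraMap R K p) ^ n)⁻¹))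
    (k : Polynomial R → ℕ) (hk : ∃ g ∈ P, k g ≠ 0) (ℓ : ℕ)
    (H : Polynomial K)
    (hH : H = (∏ g ∈ P, (g.map (algebraMap R K)) ^ (k g)) * C (((algebraMap R K p) ^ ℓ)⁻¹))
    (hHmem : H ∈ intValued R K)
    (j : ℕ) (hj : 1 ≤ j)
    (hdvd : ∃ G ∈ intValued R K, F ^ j = H * G) :
    ∀ w : R, addVal R (f.eval w) = n →
      (∑ g ∈ P, (k g) • addVal R (g.eval w)) = (ℓ : ℕ∞) :=
  stmt_8_general R K p hp P f n F hF k ℓ H hH hHmem j hdvd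
end

section
/- (Adapted Siegel's lemma) Let r ∈ ℕ₀, s ∈ ℕ, and let I, J be finite sets with |I| = r, |J| = r + s. Let n ∈ ℕ and A = (a_{i,j}) ∈ ℕ₀^{I×J} be a matrix with nonnegative integer entries such that Σ_{j∈J} a_{i,j} ≤ n for every i ∈ I, and assume A contains u rows with exactly one non-zero entry. Then there exists 0 ≠ v ∈ ℤ^J with A v = 0 and ‖v‖_∞ ≤ ⌊n^{(r−u)/s}⌋. -/
/-!
Let `P` be the rows with exactly one non-zero entry and `S` the columns carrying those entries,
so `#S ≤ #P`. Vectors supported off `S` are killed by the rows of `P`, and on the remaining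
`r - #P` rows they take at most `(n B + 1) ^ (r - #P)` values, where `B = ⌊n ^ ((r - u) / s)⌋`.
Since `n ^ (r - u) < (B + 1) ^ s`, this is less than the number `(B + 1) ^ (r + s - #S)` of
vectors with entries in `[0, B]` supported off `S`, and the difference of two vectors with the
same image is the required kernel vector.
-/

open Finset

section Box

variable {ι : Type*} [Fintype ι] [DecidableEq ι]

noncomputable def boxOn (T : Finset ι) (m : ℕ) : Finset (ι → ℤ) :=
  Fintype.piFinset fun j => if j ∈ T then Icc 0 (m : ℤ) else {0}

theorem mem_boxOn {T : Finset ι} {m : ℕ} {v : ι → ℤ} :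
    v ∈ boxOn T m ↔ ∀ j, 0 ≤ v j ∧ v j ≤ m ∧ (j ∉ T → v j = 0) := by
  refine Fintype.mem_piFinset.trans (forall_congr' fun j => ?_)
  by_cases hj : j ∈ T
  · simp [hj]
  · simp only [hj, if_false, mem_singleton, not_false_eq_true, forall_const]
    constructor
    · intro h; simp [h]
    · exact fun h => h.2.2

theorem card_boxOn (T : Finset ι) (m : ℕ) : #(boxOn T m) = (m + 1) ^ #T := by
  rw [boxOn, Fintype.card_piFinset]
  have hcard : ∀ j, #(if j ∈ T then Icc 0 (m : ℤ) else {0}) = if j ∈ T then m + 1 else 1 := by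
    intro j
    split_ifs <;> simp [Int.card_Icc]
  rw [prod_congr rfl fun j _ => hcard j, prod_ite_mem, univ_inter, prod_const]

theorem abs_sub_le_of_mem_boxOn {T : Finset ι} {m : ℕ} {v w : ι → ℤ}
    (hv : v ∈ boxOn T m) (hw : w ∈ boxOn T m) (j : ι) : |v j - w j| ≤ m := by
  have hvj := mem_boxOn.1 hv j
  have hwj := mem_boxOn.1 hw j
  rw [abs_le]
  omega

theorem sum_mul_mem_Icc_of_mem_boxOn (a : ι → ℕ) {T : Finset ι} {m : ℕ} {v : ι → ℤ}
    (hv : v ∈ boxOn T m) :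
    ∑ j, (a j : ℤ) * v j ∈ Set.Icc 0 (((∑ j ∈ T, a j : ℕ) : ℤ) * m) := by
  have hv := mem_boxOn.1 hv
  refine ⟨sum_nonneg fun j _ => mul_nonneg (by positivity) (hv j).1, ?_⟩
  calc ∑ j, (a j : ℤ) * v j = ∑ j ∈ T, (a j : ℤ) * v j :=
        (sum_subset (subset_univ T) fun j _ hj => by rw [(hv j).2.2 hj, mul_zero]).symm
    _ ≤ ∑ j ∈ T, (a j : ℤ) * m :=
        sum_le_sum fun j _ => mul_le_mul_of_nonneg_left (hv j).2.1 (by positivity)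
    _ = (∑ j ∈ T, a j) * m := by push_cast [sum_mul]; rfl

end Box

theorem exists_ne_zero_supported_kernel_vector_of_card_lt {I J : Type*} [Fintype I]
    [DecidableEq I] [Fintype J] [DecidableEq J] (A : I → J → ℕ) (R : Finset I) (T : Finset J)
    {n B : ℕ} (hrow : ∀ i ∈ R, ∑ j ∈ T, A i j ≤ n) (hcard : (n * B + 1) ^ #R < (B + 1) ^ #T) :
    ∃ v : J → ℤ, v ≠ 0 ∧ (∀ j ∉ T, v j = 0) ∧ (∀ i ∈ R, ∑ j, (A i j : ℤ) * v j = 0) ∧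
      ∀ j, |v j| ≤ B := by
  let Av (v : J → ℤ) (i : I) : ℤ := if i ∈ R then ∑ j, (A i j : ℤ) * v j else 0
  have hmaps : ∀ v ∈ boxOn T B, Av v ∈ boxOn R (n * B) := by
    intro v hv
    refine mem_boxOn.2 fun i => ?_
    by_cases hi : i ∈ R
    · obtain ⟨hnonneg, hle⟩ := sum_mul_mem_Icc_of_mem_boxOn (A i) hv
      have hrowi : ((∑ j ∈ T, A i j : ℕ) : ℤ) ≤ n := mod_cast hrow i hi
      simp only [Av, if_pos hi]
      refine ⟨hnonneg, ?_, fun h => absurd hi h⟩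
      push_cast
      exact hle.trans (mul_le_mul_of_nonneg_right hrowi (by positivity))
    · simp only [Av, if_neg hi]
      exact ⟨le_rfl, by positivity, fun _ => trivial⟩
  rw [← card_boxOn, ← card_boxOn] at hcard
  obtain ⟨x, hx, y, hy, hxy, himage⟩ := exists_ne_map_eq_of_card_lt_of_maps_to hcard hmaps
  refine ⟨x - y, sub_ne_zero.2 hxy, fun j hj => ?_, fun i hi => ?_,
    abs_sub_le_of_mem_boxOn hx hy⟩
  · simp [(mem_boxOn.1 hx j).2.2 hj, (mem_boxOn.1 hy j).2.2 hj]
  · have hi' := congrFun himage i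
    simp only [Av, hi, if_true] at hi'
    simp only [Pi.sub_apply, mul_sub, sum_sub_distrib, hi', sub_self]

theorem pow_lt_floor_rpow_div_add_one_pow (n m : ℕ) {s : ℕ} (hs : s ≠ 0) :
    n ^ m < (⌊(n : ℝ) ^ ((m : ℝ) / s)⌋₊ + 1) ^ s := by
  set x : ℝ := (n : ℝ) ^ ((m : ℝ) / s)
  have hxs : x ^ s = (n : ℝ) ^ m := by
    rw [← Real.rpow_natCast x, ← Real.rpow_mul (by positivity),
      div_mul_cancel₀ _ (Nat.cast_ne_zero.2 hs), Real.rpow_natCast]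
  have hlt : x ^ s < ((⌊x⌋₊ : ℝ) + 1) ^ s :=
    pow_lt_pow_left₀ (Nat.lt_floor_add_one x) (by positivity) hs
  exact_mod_cast hxs ▸ hlt

theorem mul_add_one_pow_lt_add_one_pow {n B k m s l : ℕ} (hn : 1 ≤ n) (hkm : k ≤ m)
    (hl : s + k ≤ l) (h : n ^ m < (B + 1) ^ s) : (n * B + 1) ^ k < (B + 1) ^ l :=
  calc (n * B + 1) ^ k ≤ (n * (B + 1)) ^ k := Nat.pow_le_pow_left (by nlinarith) k
    _ = n ^ k * (B + 1) ^ k := mul_pow n (B + 1) k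
    _ ≤ n ^ m * (B + 1) ^ k := Nat.mul_le_mul_right _ (Nat.pow_le_pow_right hn hkm)
    _ < (B + 1) ^ s * (B + 1) ^ k := Nat.mul_lt_mul_of_pos_right h (by positivity)
    _ = (B + 1) ^ (s + k) := (pow_add _ s k).symm
    _ ≤ (B + 1) ^ l := Nat.pow_le_pow_right (Nat.succ_pos B) hl

theorem stmt_12_general (I J : Type*) [Fintype I] [Fintype J]
    (r u : ℕ) (s : ℕ) (hs : 1 ≤ s)
    (hI : Fintype.card I = r) (hJ : Fintype.card J = r + s)
    (n : ℕ) (hn : 1 ≤ n) (A : I → J → ℕ)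
    (hrow : ∀ i : I, (∑ j : J, A i j) ≤ n)
    (hu : u ≤ (Finset.univ.filter fun i : I =>
      (Finset.univ.filter fun j : J => A i j ≠ 0).card = 1).card) :
    ∃ v : J → ℤ, v ≠ 0 ∧ (∀ i : I, (∑ j : J, (A i j : ℤ) * v j) = 0) ∧
      ∀ j : J, |v j| ≤ ⌊(n : ℝ) ^ (((r : ℝ) - (u : ℝ)) / (s : ℝ))⌋ := by
  classical
  set P := univ.filter fun i : I => #(univ.filter fun j : J => A i j ≠ 0) = 1
  set S := P.biUnion fun i => univ.filter fun j => A i j ≠ 0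
  set B := ⌊(n : ℝ) ^ (((r - u : ℕ) : ℝ) / s)⌋₊
  have hPr : #P ≤ r := hI ▸ card_le_univ P
  have hSP : #S ≤ #P := by
    simpa using card_biUnion_le_card_mul P _ 1 fun i hi => (mem_filter.1 hi).2.le
  have hcard : (n * B + 1) ^ #Pᶜ < (B + 1) ^ #Sᶜ := by
    refine mul_add_one_pow_lt_add_one_pow hn (m := r - u) ?_ ?_
      (pow_lt_floor_rpow_div_add_one_pow n (r - u) (by omega))
    · rw [card_compl, hI]; omega
    · rw [card_compl, card_compl, hI, hJ]; omega
  obtain ⟨v, hv0, hvS, hvA, hvB⟩ := exists_ne_zero_supported_kernel_vector_of_card_lt A Pᶜ Sᶜ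
    (fun i _ => (sum_le_sum_of_subset (subset_univ _)).trans (hrow i)) hcard
  refine ⟨v, hv0, fun i => ?_, fun j => ?_⟩
  · by_cases hi : i ∈ P
    · refine sum_eq_zero fun j _ => ?_
      by_cases hA : A i j = 0
      · simp [hA]
      · rw [hvS j (notMem_compl.2 (mem_biUnion.2 ⟨i, hi, by simpa using hA⟩)), mul_zero]
    · exact hvA i (mem_compl.2 hi)
  · rw [← Nat.cast_sub (hu.trans hPr), ← Int.natCast_floor_eq_floor (by positivity)]
    exact hvB j

theorem stmt_12 (I J : Type*) [Fintype I] [Fintype J] [DecidableEq I]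
    (r u : ℕ) (s : ℕ) (hs : 1 ≤ s)
    (hI : Fintype.card I = r) (hJ : Fintype.card J = r + s)
    (n : ℕ) (hn : 1 ≤ n) (A : I → J → ℕ)
    (hrow : ∀ i : I, (∑ j : J, A i j) ≤ n)
    (hu : u ≤ (Finset.univ.filter fun i : I =>
      (Finset.univ.filter fun j : J => A i j ≠ 0).card = 1).card) :
    ∃ v : J → ℤ, v ≠ 0 ∧ (∀ i : I, (∑ j : J, (A i j : ℤ) * v j) = 0) ∧
      ∀ j : J, |v j| ≤ ⌊(n : ℝ) ^ (((r : ℝ) - (u : ℝ)) / (s : ℝ))⌋ :=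
  stmt_12_general I J r u s hs hI hJ n hn A hrow hu
end

section
/- Let A be the r × (r+1) matrix over ℚ with A_{i,i} = 1 and A_{i,i+1} = n−1 for 1 ≤ i ≤ r−1, A_{r,r+1} = n, and all other entries zero, where n ≥ 2, r ≥ 2. Then ker(A) is one-dimensional, spanned by the vector v with v_i = (−1)^{r−i}(n−1)^{r−i} for 1 ≤ i ≤ r and v_{r+1} = 0, and ker(A) ∩ ℤ^{r+1} = ℤ·v. Consequently min{‖w⁺‖_∞ + ‖w⁻‖_∞ : 0 ≠ w ∈ ker(A) ∩ ℤ^{r+1}} = (n−1)^{r−1} + (n−1)^{r−2}. -/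
/-!
Rows `i < r - 1` of `A` say `wᵢ = -(n - 1) wᵢ₊₁` and the last row says `n w_{r+1} = 0`, so a kernel
vector vanishes in its last entry and is determined, by backward recursion, by its entry `w_r`:
`w = w_r • v`. Since `v_r = 1`, an integral kernel vector is an integral multiple of `v`.

For `c • v` with `c ≠ 0`, the first two entries have opposite signs and absolute values at least
`(n-1)^(r-1)` and `(n-1)^(r-2)`, which bounds `‖w⁺‖∞ + ‖w⁻‖∞` from below. For `v` itself the
sign of an entry is the parity of its exponent, so a positive and a negative entry have distinct
exponents `≤ r - 1`, whence the matching upper bound.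
-/

open Finset Function

-- The matrix `A` of the statement; rows and columns are indexed from `0`.
def chainMatrix (K : Type*) [Ring K] (r n : ℕ) : Fin r → Fin (r + 1) → K := fun i j =>
  if (i : ℕ) < r - 1 then
    (if (j : ℕ) = (i : ℕ) then 1 else if (j : ℕ) = (i : ℕ) + 1 then (n : K) - 1 else 0)
  else (if (j : ℕ) = r then (n : K) else 0)

def chainVec {R : Type*} [CommRing R] (r : ℕ) (a : R) : Fin (r + 1) → R := fun j =>
  if (j : ℕ) = r then 0 else (-1) ^ (r - 1 - (j : ℕ)) * a ^ (r - 1 - (j : ℕ))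

def ChainEqns {R : Type*} [CommRing R] (a : R) {r : ℕ} (w : Fin (r + 1) → R) : Prop :=
  (∀ i : Fin r, (i : ℕ) < r - 1 → w i.castSucc = -a * w i.succ) ∧ w (Fin.last r) = 0

-- `‖w⁺‖∞ + ‖w⁻‖∞`
def posNegNorm {ι : Type*} [Fintype ι] (w : ι → ℤ) : ℕ :=
  (univ.sup fun j => (max (w j) 0).toNat) + (univ.sup fun j => (max (-(w j)) 0).toNat)

section chainVec

variable {R S : Type*} [CommRing R] [CommRing S] {r : ℕ} (a : R)

theorem chainVec_last : chainVec r a (Fin.last r) = 0 := by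
  simp [chainVec]

theorem chainVec_castSucc_of_lt (i : Fin r) (hi : (i : ℕ) < r - 1) :
    chainVec r a i.castSucc = -a * chainVec r a i.succ := by
  have hexp : r - 1 - (i : ℕ) = r - 1 - ((i : ℕ) + 1) + 1 := by omega
  simp only [chainVec, Fin.val_castSucc, Fin.val_succ, if_neg (show (i : ℕ) ≠ r by omega),
    if_neg (show (i : ℕ) + 1 ≠ r by omega), hexp, pow_succ]
  ring

theorem chainVec_castSucc_of_not_lt (i : Fin r) (hi : ¬(i : ℕ) < r - 1) :
    chainVec r a i.castSucc = 1 := by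
  have hexp : r - 1 - (i : ℕ) = 0 := by omega
  simp [chainVec, hexp, i.isLt.ne]

theorem chainEqns_smul_chainVec (c : R) : ChainEqns a (c • chainVec r a) := by
  refine ⟨fun i hi => ?_, by simp [chainVec_last]⟩
  simp only [Pi.smul_apply, smul_eq_mul, chainVec_castSucc_of_lt a i hi]
  ring

theorem ChainEqns.eq_smul_chainVec {w : Fin (r + 1) → R} (hw : ChainEqns a w) :
    w = w ⟨r - 1, by omega⟩ • chainVec r a := by
  funext j
  induction j using Fin.reverseInduction with
  | last => simp [hw.2, chainVec_last]
  | cast i ih =>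
    by_cases hi : (i : ℕ) < r - 1
    · simp only [Pi.smul_apply, smul_eq_mul] at ih ⊢
      rw [hw.1 i hi, ih, chainVec_castSucc_of_lt a i hi]
      ring
    · have hidx : i.castSucc = ⟨r - 1, by omega⟩ := Fin.ext (by simp only [Fin.val_castSucc]; omega)
      simp [chainVec_castSucc_of_not_lt a i hi, ← hidx]

theorem chainEqns_iff_exists_eq_smul {w : Fin (r + 1) → R} :
    ChainEqns a w ↔ ∃ c : R, w = c • chainVec r a :=
  ⟨fun hw => ⟨_, hw.eq_smul_chainVec a⟩, by rintro ⟨c, rfl⟩; exact chainEqns_smul_chainVec a c⟩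

theorem chainEqns_map_iff {f : R →+* S} (hf : Injective f) {w : Fin (r + 1) → R} :
    ChainEqns (f a) (f ∘ w) ↔ ChainEqns a w := by
  simp only [ChainEqns, comp_apply, ← map_neg, ← map_mul, hf.eq_iff, map_eq_zero_iff f hf]

end chainVec

theorem sum_chainMatrix_mul {K : Type*} [Ring K] {r : ℕ} (n : ℕ) (w : Fin (r + 1) → K) (i : Fin r) :
    ∑ j, chainMatrix K r n i j * w j =
      if (i : ℕ) < r - 1 then w i.castSucc + ((n : K) - 1) * w i.succ else n * w (Fin.last r) := by
  unfold chainMatrix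
  split_ifs with hi
  · rw [Fintype.sum_eq_add i.castSucc i.succ Fin.castSucc_lt_succ.ne]
    · simp
    · rintro j ⟨h1, h2⟩
      simp only [ne_eq, Fin.ext_iff, Fin.val_castSucc, Fin.val_succ] at h1 h2
      simp [h1, h2]
  · rw [Fintype.sum_eq_single (Fin.last r)]
    · simp
    · intro j hj
      simp only [ne_eq, Fin.ext_iff, Fin.val_last] at hj
      simp [hj]

theorem chainMatrix_ker_iff {K : Type*} [CommRing K] [NoZeroDivisors K] {r n : ℕ} (hr : 0 < r)
    (hn : (n : K) ≠ 0) (w : Fin (r + 1) → K) :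
    (∀ i, ∑ j, chainMatrix K r n i j * w j = 0) ↔ ChainEqns ((n : K) - 1) w := by
  simp only [sum_chainMatrix_mul]
  constructor
  · intro h
    refine ⟨fun i hi => ?_, ?_⟩
    · have hrow := h i
      rw [if_pos hi] at hrow
      linear_combination hrow
    · have hrow := h ⟨r - 1, by omega⟩
      rw [if_neg (lt_irrefl _)] at hrow
      exact (mul_eq_zero.mp hrow).resolve_left hn
  · rintro ⟨hchain, hlast⟩ i
    split_ifs with hi
    · rw [hchain i hi]
      ring
    · rw [hlast, mul_zero]

section posNegNorm

variable {ι : Type*} [Fintype ι]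

theorem le_posNegNorm (w : ι → ℤ) (i j : ι) : (w i).toNat + (-w j).toNat ≤ posNegNorm w := by
  have hi := le_sup (f := fun j => (max (w j) 0).toNat) (mem_univ i)
  have hj := le_sup (f := fun j => (max (-w j) 0).toNat) (mem_univ j)
  unfold posNegNorm
  omega

theorem posNegNorm_le [Nonempty ι] {w : ι → ℤ} {B : ℕ}
    (h : ∀ i j, (w i).toNat + (-w j).toNat ≤ B) : posNegNorm w ≤ B := by
  obtain ⟨i, -, hi⟩ := exists_mem_eq_sup univ univ_nonempty fun j => (max (w j) 0).toNat
  obtain ⟨j, -, hj⟩ := exists_mem_eq_sup univ univ_nonempty fun j => (max (-w j) 0).toNat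
  have := h i j
  unfold posNegNorm
  omega

theorem natAbs_add_natAbs_le_posNegNorm (w : ι → ℤ) {i j : ι} (hij : w i * w j ≤ 0) :
    (w i).natAbs + (w j).natAbs ≤ posNegNorm w := by
  have := le_posNegNorm w i j
  have := le_posNegNorm w j i
  rcases mul_nonpos_iff.mp hij with h | h <;> omega

end posNegNorm

theorem pow_add_pow_le_of_ne {m k l N : ℕ} (hm : 1 ≤ m) (hk : k ≤ N) (hl : l ≤ N) (hkl : k ≠ l) :
    m ^ k + m ^ l ≤ m ^ N + m ^ (N - 1) := by
  wlog hlt : k < l generalizing k l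
  · rw [add_comm]
    exact this hl hk hkl.symm (by omega)
  rw [add_comm]
  exact Nat.add_le_add (Nat.pow_le_pow_right hm hl) (Nat.pow_le_pow_right hm (by omega))

section intChainVec

variable {r : ℕ} (m : ℕ)

theorem natAbs_chainVec (j : Fin (r + 1)) :
    (chainVec r (m : ℤ) j).natAbs = if (j : ℕ) = r then 0 else m ^ (r - 1 - j) := by
  unfold chainVec
  split_ifs <;> simp [Int.natAbs_mul, Int.natAbs_pow]

theorem le_posNegNorm_smul_chainVec (hr : 2 ≤ r) {c : ℤ} (hc : c ≠ 0) :
    m ^ (r - 1) + m ^ (r - 2) ≤ posNegNorm (c • chainVec r (m : ℤ)) := by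
  set w := c • chainVec r (m : ℤ)
  obtain ⟨i, hi⟩ : ∃ i : Fin r, (i : ℕ) = 0 := ⟨⟨0, by omega⟩, rfl⟩
  have hchain : w i.castSucc = -m * w i.succ :=
    (chainEqns_smul_chainVec (m : ℤ) c).1 i (by omega)
  have hsign : w i.castSucc * w i.succ ≤ 0 := by
    rw [hchain]
    nlinarith [sq_nonneg (w i.succ)]
  have hnatAbs (j : Fin (r + 1)) (hj : (j : ℕ) ≠ r) : m ^ (r - 1 - j) ≤ (w j).natAbs := by
    simp only [w, Pi.smul_apply, smul_eq_mul, Int.natAbs_mul, natAbs_chainVec, if_neg hj]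
    exact Nat.le_mul_of_pos_left _ (Int.natAbs_pos.mpr hc)
  have h0 := hnatAbs i.castSucc (by simp; omega)
  have h1 := hnatAbs i.succ (by simp; omega)
  rw [Fin.val_castSucc, hi, Nat.sub_zero] at h0
  rw [Fin.val_succ, hi, show r - 1 - (0 + 1) = r - 2 by omega] at h1
  have := natAbs_add_natAbs_le_posNegNorm w hsign
  omega

theorem posNegNorm_chainVec_le (hm : 1 ≤ m) :
    posNegNorm (chainVec r (m : ℤ)) ≤ m ^ (r - 1) + m ^ (r - 2) := by
  have hbound (j : Fin (r + 1)) : (chainVec r (m : ℤ) j).natAbs ≤ m ^ (r - 1) := by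
    rw [natAbs_chainVec]
    split_ifs
    · exact Nat.zero_le _
    · exact Nat.pow_le_pow_right hm (by omega)
  refine posNegNorm_le fun i j => ?_
  have hi := hbound i
  have hj := hbound j
  by_cases hsign : 0 < chainVec r (m : ℤ) i ∧ chainVec r (m : ℤ) j < 0
  · have hi' := natAbs_chainVec m i
    have hj' := natAbs_chainVec m j
    have hir : (i : ℕ) ≠ r := fun h => by simp [chainVec, h] at hsign
    have hjr : (j : ℕ) ≠ r := fun h => by simp [chainVec, h] at hsign
    have hij : (i : ℕ) ≠ j := fun h => by rw [Fin.ext h] at hsign; omega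
    have := pow_add_pow_le_of_ne (N := r - 1) hm (k := r - 1 - i) (l := r - 1 - j)
      (by omega) (by omega) (by omega)
    rw [if_neg hir] at hi'
    rw [if_neg hjr] at hj'
    rw [show r - 1 - 1 = r - 2 by omega] at this
    omega
  · have : m ^ (r - 1) ≤ m ^ (r - 1) + m ^ (r - 2) := Nat.le_add_right _ _
    omega

end intChainVec

theorem stmt_15 (r n : ℕ) (hr : 2 ≤ r) (hn : 2 ≤ n)
    (A : Fin r → Fin (r + 1) → ℚ)
    (hA : ∀ i j, A i j =
      if (i : ℕ) < r - 1 then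
        (if (j : ℕ) = (i : ℕ) then 1
         else if (j : ℕ) = (i : ℕ) + 1 then (n : ℚ) - 1 else 0)
      else (if (j : ℕ) = r then (n : ℚ) else 0))
    (v : Fin (r + 1) → ℚ)
    (hv : ∀ j, v j = if (j : ℕ) = r then 0
      else (-1) ^ (r - 1 - (j : ℕ)) * ((n : ℚ) - 1) ^ (r - 1 - (j : ℕ)))
    (vZ : Fin (r + 1) → ℤ)
    (hvZ : ∀ j, vZ j = if (j : ℕ) = r then 0
      else (-1) ^ (r - 1 - (j : ℕ)) * ((n : ℤ) - 1) ^ (r - 1 - (j : ℕ))) :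
    (∀ w : Fin (r + 1) → ℚ,
      (∀ i, (∑ j, A i j * w j) = 0) ↔ ∃ c : ℚ, w = c • v) ∧
    (∀ w : Fin (r + 1) → ℤ,
      (∀ i, (∑ j, A i j * (w j : ℚ)) = 0) ↔ ∃ c : ℤ, w = c • vZ) ∧
    IsLeast {t : ℕ | ∃ w : Fin (r + 1) → ℤ, w ≠ 0 ∧
        (∀ i, (∑ j, A i j * (w j : ℚ)) = 0) ∧
        t = (Finset.univ.sup fun j => (max (w j) 0).toNat) +
            (Finset.univ.sup fun j => (max (-(w j)) 0).toNat)}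
      ((n - 1) ^ (r - 1) + (n - 1) ^ (r - 2)) := by
  have hm : ((n - 1 : ℕ) : ℤ) = n - 1 := by omega
  obtain rfl : A = chainMatrix ℚ r n := funext₂ hA
  obtain rfl : v = chainVec r ((n : ℚ) - 1) := funext hv
  obtain rfl : vZ = chainVec r ((n - 1 : ℕ) : ℤ) := by rw [hm]; exact funext hvZ
  have hker := chainMatrix_ker_iff (K := ℚ) (r := r) (n := n) (by omega) (by norm_cast; omega)
  have hkerZ (w : Fin (r + 1) → ℤ) :
      (∀ i, ∑ j, chainMatrix ℚ r n i j * (w j : ℚ) = 0) ↔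
        ∃ c : ℤ, w = c • chainVec r ((n - 1 : ℕ) : ℤ) := by
    rw [← chainEqns_iff_exists_eq_smul, ← chainEqns_map_iff _ (Int.castRingHom ℚ).injective_int,
      hker]
    simp [hm, Function.comp_def]
  refine ⟨fun w => (hker w).trans (chainEqns_iff_exists_eq_smul _), hkerZ,
    ⟨chainVec r _, fun h => ?_, (hkerZ _).2 ⟨1, (one_smul _ _).symm⟩, ?_⟩, ?_⟩
  · have := chainVec_castSucc_of_not_lt ((n - 1 : ℕ) : ℤ) ⟨r - 1, by omega⟩ (lt_irrefl _)
    simp [h] at this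
  · refine ((posNegNorm_chainVec_le (n - 1) (by omega)).antisymm ?_).symm
    simpa using le_posNegNorm_smul_chainVec (n - 1) hr one_ne_zero
  · rintro t ⟨w, hw0, hw, rfl⟩
    obtain ⟨c, rfl⟩ := (hkerZ w).1 hw
    exact le_posNegNorm_smul_chainVec _ hr (by rintro rfl; simp at hw0)
end

section
/- Let (R, pR) be a discrete valuation domain with finite residue field and valuation v, and let F = f/p ∈ Int(R) with f ∈ R[x] primitive and fixed divisor d(f) = pR. Suppose f = g·h in R[x] with h non-constant irreducible such that v(f(a)) ≥ 2 for every a ∈ R with v(h(a)) ≥ 1. Then F² = (g²h/p²)·h is a factorization of F² in Int(R); in particular g²h/p² ∈ Int(R). -/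
open Polynomial IsDiscreteValuationRing

/-!
Since `p` is prime, at each `a` either `p ∣ h(a)`, and then `p² ∣ f(a) = g(a)h(a)`, which divides
`g(a)²h(a)`; or `p ∣ g(a)`, and then `p² ∣ g(a)²`. So `g²h/p²` is integer-valued, and
`F² = (g²h/p²)·h` is an identity in `K[x]`.
-/

lemma sq_dvd_sq_mul_of_dvd_mul {M : Type*} [CommMonoidWithZero M] {p x y : M} (hp : Prime p)
    (hxy : p ∣ x * y) (hy : p ∣ y → p ^ 2 ∣ x * y) : p ^ 2 ∣ x ^ 2 * y := by
  by_cases hpy : p ∣ y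
  · rw [sq x, mul_assoc]
    exact (hy hpy).mul_left x
  · have hpx : p ∣ x := (hp.dvd_mul.mp hxy).resolve_right hpy
    exact (pow_dvd_pow_of_dvd hpx 2).mul_right y

lemma map_mul_C_inv_mem_intValued {R K : Type*} [CommRing R] [Field K] [Algebra R K]
    [IsFractionRing R K] {q : R} (hq : q ≠ 0) {G : R[X]} (hG : ∀ a : R, q ∣ G.eval a) :
    G.map (algebraMap R K) * C (algebraMap R K q)⁻¹ ∈ intValued R K := by
  intro a
  obtain ⟨b, hb⟩ := hG a
  have hq' : algebraMap R K q ≠ 0 := (map_ne_zero_iff _ (IsFractionRing.injective R K)).mpr hq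
  refine ⟨b, ?_⟩
  rw [eval_mul, eval_C, eval_map_algebraMap, aeval_algebraMap_apply, coe_aeval_eq_eval, hb,
    map_mul, mul_comm, inv_mul_cancel_left₀ hq']

theorem stmt_18_general (R K : Type*) [CommRing R] [IsDomain R] [IsDiscreteValuationRing R]
    [Field K] [Algebra R K] [IsFractionRing R K]
    (p : R) (hp : Irreducible p)
    (f g h : Polynomial R)
    (hfgh : f = g * h)
    (hfix1 : ∀ a : R, p ∣ f.eval a)
    (hroots : ∀ a : R, p ∣ h.eval a → p ^ 2 ∣ f.eval a) :
    (∀ a : R, p ^ 2 ∣ (g ^ 2 * h).eval a) ∧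
    ((g ^ 2 * h).map (algebraMap R K) * C (((algebraMap R K p) ^ 2)⁻¹) ∈ intValued R K) ∧
    (f.map (algebraMap R K) * C ((algebraMap R K p)⁻¹)) ^ 2 =
      ((g ^ 2 * h).map (algebraMap R K) * C (((algebraMap R K p) ^ 2)⁻¹)) *
        (h.map (algebraMap R K)) := by
  subst hfgh
  have hdvd : ∀ a : R, p ^ 2 ∣ (g ^ 2 * h).eval a := fun a => by
    simp only [eval_mul, eval_pow] at hfix1 hroots ⊢
    exact sq_dvd_sq_mul_of_dvd_mul hp.prime (hfix1 a) (hroots a)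
  refine ⟨hdvd, ?_, ?_⟩
  · rw [← map_pow]
    exact map_mul_C_inv_mem_intValued (pow_ne_zero 2 hp.ne_zero) hdvd
  · simp only [Polynomial.map_mul, Polynomial.map_pow, ← inv_pow, C_pow]
    ring

theorem stmt_18 (R K : Type*) [CommRing R] [IsDomain R] [IsDiscreteValuationRing R]
    [Field K] [Algebra R K] [IsFractionRing R K]
    [Finite (R ⧸ IsLocalRing.maximalIdeal R)]
    (p : R) (hp : Irreducible p)
    (f g h : Polynomial R) (hprim : f.IsPrimitive)
    (hfgh : f = g * h) (hhdeg : 0 < h.natDegree) (hhirr : Irreducible h)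
    (hfix1 : ∀ a : R, p ∣ f.eval a) (hfix2 : ∃ a : R, ¬ p ^ 2 ∣ f.eval a)
    (hroots : ∀ a : R, p ∣ h.eval a → p ^ 2 ∣ f.eval a) :
    (∀ a : R, p ^ 2 ∣ (g ^ 2 * h).eval a) ∧
    ((g ^ 2 * h).map (algebraMap R K) * C (((algebraMap R K p) ^ 2)⁻¹) ∈ intValued R K) ∧
    (f.map (algebraMap R K) * C ((algebraMap R K p)⁻¹)) ^ 2 =
      ((g ^ 2 * h).map (algebraMap R K) * C (((algebraMap R K p) ^ 2)⁻¹)) *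
        (h.map (algebraMap R K)) :=
  stmt_18_general R K p hp f g h hfgh hfix1 hroots
end

section
/- Let (R, pR) be a discrete valuation domain with finite residue field, P a nonempty finite set of pairwise non-associated irreducible non-constant polynomials in R[x], m ∈ ℕ^P, n ∈ ℕ₀, and F = (∏_{g∈P} g^{m_g})/pⁿ ∈ Int(R) with fixed divisor of the numerator equal to pⁿ. If F = F₁ ⋯ F_r is a factorization of F into non-units of Int(R), then each F_j is associated in Int(R) to a polynomial of the form (∏_{g∈P} g^{m_{j,g}})/p^{k_j} with m_{j,g} ∈ ℕ₀, k_j ∈ ℕ₀, Σ_j k_j = n, and Σ_j m_{j,g} = m_g for every g ∈ P. -/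
open Polynomial IsDiscreteValuationRing

/-! Over `K` the polynomials `g ∈ P` stay irreducible and pairwise non-associated (Gauss's lemma),
so unique factorization in `K[x]` forces `F_j = c_j ∏ g ^ m_{j,g}` with `c_j ∈ K` and
`∑_j m_{j,g} = m_g`. Evaluate at a point `a` with `v(f(a)) = n` and write the value of
`∏ g ^ m_{j,g}` at `a` as `w_j p ^ k_j` with `w_j` a unit, so that `∑_j k_j = n`. Since
`F_j(a) ∈ R`, each `c_j p ^ k_j` lies in `R`, and these elements multiply to `1`; hence they are
units of `R`, which is exactly the claimed shape of `F_j` up to a unit of `Int(R)`. -/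

open UniqueFactorizationMonoid

theorem Multiset.sum_count_nsmul_eq_of_forall_mem {α β : Type*} [DecidableEq α] {P : Finset β}
    {φ : β → α} (hφ : Set.InjOn φ P) {s : Multiset α} (hs : ∀ a ∈ s, ∃ i ∈ P, φ i = a) :
    ∑ i ∈ P, s.count (φ i) • {φ i} = s := by
  have hsub : s.toFinset ⊆ P.image φ := fun a ha => by
    simpa using hs a (Multiset.mem_toFinset.mp ha)
  rw [← Finset.sum_image (f := fun a => s.count a • ({a} : Multiset α)) hφ,
    ← Finset.sum_subset hsub fun a _ ha => by simp [Multiset.count_eq_zero.mpr (by simpa using ha)],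
    Multiset.toFinset_sum_count_nsmul_eq]

theorem Multiset.count_sum_nsmul_singleton {α β : Type*} [DecidableEq α] {P : Finset β}
    {φ : β → α} (hφ : Set.InjOn φ P) (m : β → ℕ) {i : β} (hi : i ∈ P) :
    (∑ j ∈ P, m j • ({φ j} : Multiset α)).count (φ i) = m i := by
  rw [Multiset.count_sum', Finset.sum_eq_single_of_mem i hi fun j hj hji => ?_]
  · simp
  · rw [Multiset.count_nsmul, Multiset.count_singleton, if_neg fun h => hji (hφ hj hi h.symm),
      mul_zero]

section UniqueFactorizationMonoid

variable {α : Type*} [CommMonoidWithZero α] [NormalizationMonoid α] [UniqueFactorizationMonoid α]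

theorem UniqueFactorizationMonoid.normalizedFactors_prod {ι : Type*} (s : Finset ι) {f : ι → α}
    (hf : ∀ i ∈ s, f i ≠ 0) :
    normalizedFactors (∏ i ∈ s, f i) = ∑ i ∈ s, normalizedFactors (f i) := by
  rw [Finset.prod_eq_multiset_prod, normalizedFactors_multiset_prod _ (by simpa using hf),
    Multiset.map_map]
  rfl

theorem UniqueFactorizationMonoid.normalizedFactors_prod_pow {β : Type*} (P : Finset β)
    {q : β → α} (hq : ∀ i ∈ P, Irreducible (q i)) (m : β → ℕ) :
    normalizedFactors (∏ i ∈ P, q i ^ m i) = ∑ i ∈ P, m i • {normalize (q i)} := by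
  rw [normalizedFactors_prod P fun i hi => pow_ne_zero _ (hq i hi).ne_zero]
  exact Finset.sum_congr rfl fun i hi => by
    rw [normalizedFactors_pow, normalizedFactors_irreducible (hq i hi)]

theorem UniqueFactorizationMonoid.associated_prod_pow_of_normalizedFactors_eq {β : Type*}
    (P : Finset β) (q : β → α) (e : β → ℕ) {x : α} (hx : x ≠ 0)
    (h : normalizedFactors x = ∑ i ∈ P, e i • {normalize (q i)}) :
    Associated x (∏ i ∈ P, q i ^ e i) := by
  refine (prod_normalizedFactors hx).symm.trans ?_
  rw [h, Multiset.prod_sum]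
  refine Associated.prod _ _ _ fun i _ => ?_
  rw [Multiset.prod_nsmul, Multiset.prod_singleton]
  exact (normalize_associated (q i)).pow_pow

end UniqueFactorizationMonoid

theorem UniqueFactorizationMonoid.exists_associated_prod_pow_of_associated_prod
    {α ι β : Type*} [CommMonoidWithZero α] [Nontrivial α] [UniqueFactorizationMonoid α] [Fintype ι]
    (P : Finset β) {q : β → α} (hq : ∀ i ∈ P, Irreducible (q i))
    (hq_assoc : ∀ i ∈ P, ∀ j ∈ P, i ≠ j → ¬Associated (q i) (q j)) (m : β → ℕ) (y : ι → α)
    (hy : Associated (∏ j, y j) (∏ i ∈ P, q i ^ m i)) :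
    ∃ e : ι → β → ℕ, (∀ i ∈ P, ∑ j, e j i = m i) ∧
      ∀ j, Associated (y j) (∏ i ∈ P, q i ^ e j i) := by
  classical
  let := UniqueFactorizationMonoid.strongNormalizationMonoid (α := α)
  have hy0 : ∀ j, y j ≠ 0 := fun j hj =>
    Finset.prod_ne_zero_iff.mpr (fun i hi => pow_ne_zero (m i) (hq i hi).ne_zero)
      (hy.eq_zero_iff.mp (Finset.prod_eq_zero (Finset.mem_univ j) hj))
  have hφ : Set.InjOn (fun i => normalize (q i)) P := fun i hi j hj h => by
    by_contra hij
    exact hq_assoc i hi j hj hij (normalize_eq_normalize_iff_associated.mp h)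
  have hfactors : ∑ j, normalizedFactors (y j) = ∑ i ∈ P, m i • {normalize (q i)} := by
    rw [← normalizedFactors_prod _ fun j _ => hy0 j, hy.normalizedFactors_eq,
      normalizedFactors_prod_pow P hq]
  refine ⟨fun j i => (normalizedFactors (y j)).count (normalize (q i)), fun i hi => ?_,
    fun j => associated_prod_pow_of_normalizedFactors_eq P q _ (hy0 j) ?_⟩
  · rw [← Multiset.count_sum', hfactors, Multiset.count_sum_nsmul_singleton hφ m hi]
  · refine (Multiset.sum_count_nsmul_eq_of_forall_mem hφ fun a ha => ?_).symm
    have ha' : a ∈ ∑ i ∈ P, m i • ({normalize (q i)} : Multiset α) :=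
      hfactors ▸ Multiset.mem_sum.mpr ⟨j, Finset.mem_univ j, ha⟩
    obtain ⟨i, hi, hai⟩ := Multiset.mem_sum.mp ha'
    exact ⟨i, hi, (Multiset.mem_singleton.mp (Multiset.mem_of_mem_nsmul hai)).symm⟩

theorem Polynomial.IsPrimitive.associated_of_associated_map {R K : Type*} [CommRing R] [IsDomain R]
    [IsGCDMonoid R] [Field K] [Algebra R K] [IsFractionRing R K] {f g : R[X]}
    (hf : f.IsPrimitive) (hg : g.IsPrimitive)
    (h : Associated (f.map (algebraMap R K)) (g.map (algebraMap R K))) : Associated f g :=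
  associated_of_dvd_dvd (hf.dvd_of_fraction_map_dvd_fraction_map h.dvd)
    (hg.dvd_of_fraction_map_dvd_fraction_map h.symm.dvd)

namespace intValued

variable {R K : Type*} [CommRing R] [Field K] [Algebra R K]

noncomputable def constHom : R →+* intValued R K :=
  (C.comp (algebraMap R K)).codRestrict (intValued R K) fun r _ => ⟨r, eval_C⟩

theorem associated_mk_mul_C {F : intValued R K} (u : Rˣ) {G : K[X]}
    (hG : G = F * C (algebraMap R K u)) :
    ∃ hmem : G ∈ intValued R K, Associated F ⟨G, hmem⟩ := by
  have hFu : (⟨G, hG ▸ (F * constHom (u : R)).2⟩ : intValued R K) = F * constHom (u : R) :=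
    Subtype.ext hG
  exact ⟨_, hFu ▸ associated_mul_unit_right F _ (u.isUnit.map constHom)⟩

end intValued

section DiscreteValuationRing

variable {R K : Type*} [CommRing R] [IsDomain R] [IsDiscreteValuationRing R] [Field K]
  [Algebra R K] [IsFractionRing R K]

theorem IsDiscreteValuationRing.exists_eq_unit_mul_inv_pow {ι : Type*} [Fintype ι] {p : R}
    (hp : Irreducible p) {n : ℕ} (c : ι → K) (d : ι → R)
    (hc : ∏ j, c j = (algebraMap R K p ^ n)⁻¹) (hd : addVal R (∏ j, d j) = n)
    (hcd : ∀ j, ∃ b : R, algebraMap R K (d j) * c j = algebraMap R K b) :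
    ∃ k : ι → ℕ, ∑ j, k j = n ∧
      ∀ j, ∃ u : Rˣ, c j = algebraMap R K u * (algebraMap R K p ^ k j)⁻¹ := by
  set κ := algebraMap R K
  have hp0 : κ p ≠ 0 := (map_ne_zero_iff κ (IsFractionRing.injective R K)).mpr hp.ne_zero
  have hd0 : ∀ j, d j ≠ 0 := fun j h0 => by
    rw [Finset.prod_eq_zero (Finset.mem_univ j) h0, addVal_zero] at hd
    exact ENat.top_ne_natCast n hd
  choose k w hw using fun j => eq_unit_mul_pow_irreducible (hd0 j) hp
  have hk : ∑ j, k j = n := by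
    have hprod : ∏ j, d j = ↑(∏ j, w j) * p ^ ∑ j, k j := by
      simp only [hw, Finset.prod_mul_distrib, Finset.prod_pow_eq_pow_sum, Units.coe_prod]
    exact_mod_cast (addVal_def _ _ hp _ hprod).symm.trans hd
  choose b hb using hcd
  set r : ι → R := fun j => b j * ↑(w j)⁻¹
  have hr : ∀ j, κ (r j) = c j * κ p ^ k j := fun j => by
    have hwj : κ (w j) * κ ↑(w j)⁻¹ = 1 := by rw [← map_mul, Units.mul_inv, map_one]
    rw [map_mul, ← hb, hw, map_mul, map_pow]
    linear_combination (c j * κ p ^ k j) * hwj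
  have hr1 : ∏ j, r j = 1 := IsFractionRing.injective R K <| by
    rw [map_prod, map_one, Finset.prod_congr rfl fun j _ => hr j, Finset.prod_mul_distrib, hc,
      Finset.prod_pow_eq_pow_sum, hk, inv_mul_cancel₀ (pow_ne_zero n hp0)]
  have hru : ∀ j, IsUnit (r j) := IsUnit.prod_univ_iff.mp (hr1 ▸ isUnit_one)
  refine ⟨k, hk, fun j => ⟨(hru j).unit, ?_⟩⟩
  rw [IsUnit.unit_spec, hr, mul_inv_cancel_right₀ (pow_ne_zero _ hp0)]

theorem intValued.exists_associated_map_mul_C_inv_pow {ι : Type*} [Fintype ι] {p : R}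
    (hp : Irreducible p) {n : ℕ} (h : ι → R[X]) (Fs : ι → intValued R K)
    (hFs : ∀ j, Associated (Fs j : K[X]) ((h j).map (algebraMap R K)))
    (hprod : ∏ j, (Fs j : K[X]) =
      (∏ j, h j).map (algebraMap R K) * C ((algebraMap R K p ^ n)⁻¹))
    {a : R} (ha : addVal R ((∏ j, h j).eval a) = n) :
    ∃ k : ι → ℕ, ∑ j, k j = n ∧ ∀ j,
      ∃ hmem : (h j).map (algebraMap R K) * C ((algebraMap R K p ^ k j)⁻¹) ∈ intValued R K,
        Associated (Fs j) ⟨_, hmem⟩ := by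
  set κ := algebraMap R K
  have hc : ∀ j, ∃ c : K, (Fs j : K[X]) = (h j).map κ * C c := fun j => by
    obtain ⟨u, hu⟩ := (hFs j).symm
    obtain ⟨c, -, hc⟩ := Polynomial.isUnit_iff.mp u.isUnit
    exact ⟨c, by rw [← hu, hc]⟩
  choose c hc using hc
  have hh0 : (∏ j, h j).map κ ≠ 0 := fun h0 => by
    rw [Polynomial.map_eq_zero_iff (IsFractionRing.injective R K)] at h0
    rw [h0, eval_zero, addVal_zero] at ha
    exact ENat.top_ne_natCast n ha
  have hcprod : ∏ j, c j = (κ p ^ n)⁻¹ := by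
    refine C_injective (mul_left_cancel₀ hh0 ?_)
    rw [← hprod, Finset.prod_congr rfl fun j _ => hc j, Finset.prod_mul_distrib, map_prod,
      Polynomial.map_prod]
  have hcd : ∀ j, ∃ b : R, κ ((h j).eval a) * c j = κ b := fun j => by
    obtain ⟨b, hb⟩ := (Fs j).2 a
    exact ⟨b, by rw [← hb, hc j, eval_mul, eval_C, eval_map, eval₂_at_apply]⟩
  obtain ⟨k, hk, hu⟩ := IsDiscreteValuationRing.exists_eq_unit_mul_inv_pow hp c _ hcprod
    (by rwa [← eval_prod]) hcd
  refine ⟨k, hk, fun j => ?_⟩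
  obtain ⟨u, hu⟩ := hu j
  refine intValued.associated_mk_mul_C u⁻¹ ?_
  have hu' : algebraMap R K u * algebraMap R K ↑u⁻¹ = 1 := by
    rw [← map_mul, Units.mul_inv, map_one]
  rw [hc j, hu, mul_assoc, ← C_mul]
  congr 2
  linear_combination -(κ p ^ k j)⁻¹ * hu'

end DiscreteValuationRing

theorem stmt_19_general (R K : Type*) [CommRing R] [IsDomain R] [IsDiscreteValuationRing R]
    [Field K] [Algebra R K] [IsFractionRing R K]
    (p : R) (hp : Irreducible p)
    (P : Finset (Polynomial R))
    (hirr : ∀ g ∈ P, Irreducible g) (hdeg : ∀ g ∈ P, 0 < g.natDegree)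
    (hassoc : ∀ g ∈ P, ∀ h ∈ P, g ≠ h → ¬ Associated g h)
    (m : Polynomial R → ℕ)
    (f : Polynomial R) (hf : f = ∏ g ∈ P, g ^ (m g)) (n : ℕ)
    (hwit : ∃ a : R, addVal R (f.eval a) = n)
    (F : Polynomial K) (hF : F = (f.map (algebraMap R K)) * C (((algebraMap R K p) ^ n)⁻¹))
    (hmem : F ∈ intValued R K)
    (t : ℕ) (Fs : Fin t → intValued R K)
    (hprod : (∏ j, Fs j) = (⟨F, hmem⟩ : intValued R K)) :
    ∃ (mj : Fin t → Polynomial R → ℕ) (kj : Fin t → ℕ),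
      (∑ j, kj j) = n ∧
      (∀ g ∈ P, (∑ j, mj j g) = m g) ∧
      ∀ j : Fin t,
        ∃ hmemj : ((∏ g ∈ P, (g.map (algebraMap R K)) ^ (mj j g)) *
            C (((algebraMap R K p) ^ (kj j))⁻¹)) ∈ intValued R K,
          Associated (Fs j)
            (⟨(∏ g ∈ P, (g.map (algebraMap R K)) ^ (mj j g)) *
              C (((algebraMap R K p) ^ (kj j))⁻¹), hmemj⟩ : intValued R K) := by
  have hprim : ∀ g ∈ P, g.IsPrimitive := fun g hg => (hirr g hg).isPrimitive (hdeg g hg).ne'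
  have hirrK : ∀ g ∈ P, Irreducible (g.map (algebraMap R K)) := fun g hg =>
    (hprim g hg).irreducible_iff_irreducible_map_fraction_map.mp (hirr g hg)
  have hassocK : ∀ g ∈ P, ∀ h ∈ P, g ≠ h →
      ¬Associated (g.map (algebraMap R K)) (h.map (algebraMap R K)) := fun g hg h hh hgh hK =>
    hassoc g hg h hh hgh ((hprim g hg).associated_of_associated_map (hprim h hh) hK)
  have hFs : ∏ j, (Fs j : K[X]) = f.map (algebraMap R K) * C ((algebraMap R K p ^ n)⁻¹) := by
    rw [← hF, ← SubmonoidClass.coe_finsetProd, hprod]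
  obtain ⟨e, he_sum, he_assoc⟩ :=
    exists_associated_prod_pow_of_associated_prod P hirrK hassocK m (fun j => (Fs j : K[X])) <| by
      simpa [hFs, hf, Polynomial.map_prod] using
        associated_mul_unit_left _ _ (isUnit_C.mpr (IsUnit.mk0 _ (by simp [hp.ne_zero])))
  have hprod_e : ∏ j, ∏ g ∈ P, g ^ e j g = f := by
    rw [hf, Finset.prod_comm]
    exact Finset.prod_congr rfl fun g hg => by rw [Finset.prod_pow_eq_pow_sum, he_sum g hg]
  obtain ⟨a, ha⟩ := hwit
  obtain ⟨k, hk, hassoc_k⟩ := intValued.exists_associated_map_mul_C_inv_pow hp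
    (fun j => ∏ g ∈ P, g ^ e j g) Fs (by simpa [Polynomial.map_prod] using he_assoc)
    (by rw [hprod_e, hFs]) (by rwa [hprod_e])
  exact ⟨e, k, hk, he_sum, by simpa [Polynomial.map_prod] using hassoc_k⟩

theorem stmt_19 (R K : Type*) [CommRing R] [IsDomain R] [IsDiscreteValuationRing R]
    [Field K] [Algebra R K] [IsFractionRing R K]
    [Finite (R ⧸ IsLocalRing.maximalIdeal R)]
    (p : R) (hp : Irreducible p)
    (P : Finset (Polynomial R)) (hPne : P.Nonempty)
    (hirr : ∀ g ∈ P, Irreducible g) (hdeg : ∀ g ∈ P, 0 < g.natDegree)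
    (hassoc : ∀ g ∈ P, ∀ h ∈ P, g ≠ h → ¬ Associated g h)
    (m : Polynomial R → ℕ) (hm : ∀ g ∈ P, 1 ≤ m g)
    (f : Polynomial R) (hf : f = ∏ g ∈ P, g ^ (m g)) (n : ℕ)
    (hge : ∀ a : R, (n : ℕ∞) ≤ addVal R (f.eval a))
    (hwit : ∃ a : R, addVal R (f.eval a) = n)
    (F : Polynomial K) (hF : F = (f.map (algebraMap R K)) * C (((algebraMap R K p) ^ n)⁻¹))
    (hmem : F ∈ intValued R K)
    (t : ℕ) (Fs : Fin t → intValued R K)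
    (hnonunit : ∀ j, ¬ IsUnit (Fs j))
    (hprod : (∏ j, Fs j) = (⟨F, hmem⟩ : intValued R K)) :
    ∃ (mj : Fin t → Polynomial R → ℕ) (kj : Fin t → ℕ),
      (∑ j, kj j) = n ∧
      (∀ g ∈ P, (∑ j, mj j g) = m g) ∧
      ∀ j : Fin t,
        ∃ hmemj : ((∏ g ∈ P, (g.map (algebraMap R K)) ^ (mj j g)) *
            C (((algebraMap R K p) ^ (kj j))⁻¹)) ∈ intValued R K,
          Associated (Fs j)
            (⟨(∏ g ∈ P, (g.map (algebraMap R K)) ^ (mj j g)) *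
              C (((algebraMap R K p) ^ (kj j))⁻¹), hmemj⟩ : intValued R K) :=
  stmt_19_general R K p hp P hirr hdeg hassoc m f hf n hwit F hF hmem t Fs hprod
end
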